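/- arXiv:2412.16765 — 4 statements merged into one kernel-verified Lean document; each statement's English description precedes it below -/
import Mathlib

section
/- Let u^1,...,u^L : [0,∞) → ℝ^d satisfy the gradient flow du^j/dt = -(⊙_{k≠j} u^k) ⊙ ∇L(θ) with θ = ⊙_j u^j. Then for all layers j, k, all t ≥ 0 and all components i ∈ [d], u^j_i(t)^2 - u^j_i(0)^2 = u^k_i(t)^2 - u^k_i(0)^2. -/
open Finset

/-- The gradient of `f : ℝ^d → ℝ`, given componentwise by the partial derivatives. -/
noncomputable def grad {d : ℕ} (f : (Fin d → ℝ) → ℝ) (x : Fin d → ℝ) (i : Fin d) : ℝ :=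
  fderiv ℝ f x (Pi.single i 1)

/-! Along the flow, `d/dt (u_j²) = 2 u_j u_j' = -2 (∏_k u_k) ∇L`, which does not depend on the
layer `j`; two functions with the same derivative on `[0, t]` have the same increment there. -/

theorem sub_eq_sub_of_hasDerivAt_eq {f g f' : ℝ → ℝ} {a b : ℝ} (hab : a ≤ b)
    (hf : ∀ s ∈ Set.Icc a b, HasDerivAt f (f' s) s)
    (hg : ∀ s ∈ Set.Icc a b, HasDerivAt g (f' s) s) :
    f b - f a = g b - g a := by
  have hderiv : ∀ s ∈ Set.Icc a b, HasDerivAt (f - g) 0 s := fun s hs => by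
    simpa using (hf s hs).sub (hg s hs)
  have hconst := constant_of_has_deriv_right_zero
    (fun s hs => (hderiv s hs).continuousAt.continuousWithinAt)
    (fun s hs => (hderiv s (Set.Ico_subset_Icc_self hs)).hasDerivWithinAt) b
    (Set.right_mem_Icc.mpr hab)
  simp only [Pi.sub_apply] at hconst
  linarith

theorem hasDerivAt_sq_of_hasDerivAt_prod_erase {ι : Type*} [Fintype ι] [DecidableEq ι]
    {v : ι → ℝ → ℝ} {c t : ℝ} {j : ι}
    (hj : HasDerivAt (v j) (-((∏ k ∈ univ.erase j, v k t) * c)) t) :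
    HasDerivAt (fun s => v j s ^ 2) (-(2 * (∏ k, v k t) * c)) t := by
  refine (hj.pow 2).congr_deriv ?_
  rw [← mul_prod_erase univ (fun k => v k t) (mem_univ j)]
  push_cast
  ring

theorem stmt_1_general {L d : ℕ} (u : Fin L → ℝ → Fin d → ℝ) (Loss : (Fin d → ℝ) → ℝ)
    (θ : ℝ → Fin d → ℝ)
    (hflow : ∀ j, ∀ t ≥ (0:ℝ), ∀ i,
      HasDerivAt (fun s => u j s i)
        (-((∏ k ∈ Finset.univ.erase j, u k t i) * grad Loss (θ t) i)) t) :
    ∀ j k : Fin L, ∀ t ≥ (0:ℝ), ∀ i,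
      u j t i ^ 2 - u j 0 i ^ 2 = u k t i ^ 2 - u k 0 i ^ 2 := by
  intro j k t ht i
  have hsq : ∀ l, ∀ s ∈ Set.Icc 0 t, HasDerivAt (fun s => u l s i ^ 2)
      (-(2 * (∏ m, u m s i) * grad Loss (θ s) i)) s := fun l s hs =>
    hasDerivAt_sq_of_hasDerivAt_prod_erase (v := fun m s => u m s i) (hflow l s hs.1 i)
  exact sub_eq_sub_of_hasDerivAt_eq ht (hsq j) (hsq k)

theorem stmt_1 {L d : ℕ} (u : Fin L → ℝ → Fin d → ℝ) (Loss : (Fin d → ℝ) → ℝ)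
    (hLoss : ContDiff ℝ 1 Loss)
    (θ : ℝ → Fin d → ℝ) (hθ : ∀ t i, θ t i = ∏ j, u j t i)
    (hflow : ∀ j, ∀ t ≥ (0:ℝ), ∀ i,
      HasDerivAt (fun s => u j s i)
        (-((∏ k ∈ Finset.univ.erase j, u k t i) * grad Loss (θ t) i)) t) :
    ∀ j k : Fin L, ∀ t ≥ (0:ℝ), ∀ i,
      u j t i ^ 2 - u j 0 i ^ 2 = u k t i ^ 2 - u k 0 i ^ 2 :=
  stmt_1_general u Loss θ hflow
end

section
/- Let u^1,...,u^L : [0,∞) → ℝ^d satisfy the gradient flow du^j/dt = -(⊙_{k≠j} u^k) ⊙ ∇L(θ) with θ = ⊙_j u^j. Fix a component i ∈ [d] and a layer j such that |u^j_i(0)| > |u^l_i(0)| for some layer l. Then u^j_i(t) ≠ 0 for every t > 0. -/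
open Finset

theorem stmt_2 {L d : ℕ} (u : Fin L → ℝ → Fin d → ℝ) (Loss : (Fin d → ℝ) → ℝ)
    (hLoss : ContDiff ℝ 1 Loss)
    (θ : ℝ → Fin d → ℝ) (hθ : ∀ t i, θ t i = ∏ j, u j t i)
    (hflow : ∀ j, ∀ t ≥ (0:ℝ), ∀ i,
      HasDerivAt (fun s => u j s i)
        (-((∏ k ∈ Finset.univ.erase j, u k t i) * grad Loss (θ t) i)) t)
    (i : Fin d) (j : Fin L) (hj : ∃ l : Fin L, |u l 0 i| < |u j 0 i|) :
    ∀ t > (0:ℝ), u j t i ≠ 0 := by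
  obtain ⟨l, hl⟩ := hj
  intro t ht hzero
  set f : ℝ → ℝ := fun s => (u j s i) ^ 2 - (u l s i) ^ 2 with hf
  have key : ∀ s ∈ Set.Icc (0:ℝ) t, HasDerivAt f 0 s := by
    intro s hs
    have hjs := hflow j s hs.1 i
    have hls := hflow l s hs.1 i
    have h1 := (hjs.pow 2).sub (hls.pow 2)
    have e1 : u j s i * ∏ k ∈ Finset.univ.erase j, u k s i = ∏ k, u k s i :=
      Finset.mul_prod_erase Finset.univ (fun k => u k s i) (Finset.mem_univ j)
    have e2 : u l s i * ∏ k ∈ Finset.univ.erase l, u k s i = ∏ k, u k s i :=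
      Finset.mul_prod_erase Finset.univ (fun k => u k s i) (Finset.mem_univ l)
    have hD : (2:ℕ) * u j s i ^ (2-1) * (-((∏ k ∈ Finset.univ.erase j, u k s i) * grad Loss (θ s) i))
        - (2:ℕ) * u l s i ^ (2-1) * (-((∏ k ∈ Finset.univ.erase l, u k s i) * grad Loss (θ s) i)) = 0 := by
      push_cast
      simp only [pow_one]
      linear_combination (-2 * grad Loss (θ s) i) * e1 + 2 * grad Loss (θ s) i * e2
    rw [hD] at h1
    exact h1
  have hconst : f t = f 0 := by
    apply constant_of_has_deriv_right_zero
      (fun s hs => (key s hs).continuousAt.continuousWithinAt)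
      (fun s hs => (key s ⟨hs.1, hs.2.le⟩).hasDerivWithinAt)
    exact ⟨le_of_lt ht, le_refl t⟩
  have hlt : (u l 0 i) ^ 2 < (u j 0 i) ^ 2 := by
    rw [← sq_abs, ← sq_abs (u j 0 i)]
    exact pow_lt_pow_left₀ hl (abs_nonneg _) two_ne_zero
  simp only [hf, hzero] at hconst
  nlinarith [sq_nonneg (u l t i)]
end

section
/- Let u^1,...,u^L satisfy the gradient flow of a deep diagonal linear network, and for component i let l uniquely attain min_k |u^k_i(0)|. Then for every layer j ≠ l and every t ≥ 0, u^j_i(t) = sign(u^j_i(0)) · sqrt(u^l_i(t)^2 + u^j_i(0)^2 - u^l_i(0)^2). In particular, each non-minimal layer's trajectory is determined by the trajectory of the minimal layer and the initialization. -/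
/-!
Along the flow every layer moves by `-(∏_{k ≠ j} u^k) · ∇L`, so `d/dt (u^j_i)² = -2 θ_i ∂_iL`
is the same for all layers and `(u^j_i)² - (u^l_i)²` is conserved. When `l` is the strictly
smallest layer at time `0`, this conserved gap is positive, so `u^j_i` never vanishes and, by
the intermediate value theorem, keeps the sign of `u^j_i(0)`; the conservation law then gives
`|u^j_i(t)|`.
-/

open Finset

open Set

theorem Real.sign_mul_sqrt_sq (x : ℝ) : Real.sign x * √(x ^ 2) = x := by
  rw [Real.sqrt_sq_eq_abs]
  rcases lt_trichotomy x 0 with hx | rfl | hx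
  · rw [Real.sign_of_neg hx, abs_of_neg hx]; ring
  · simp
  · rw [Real.sign_of_pos hx, abs_of_pos hx]; ring

theorem Real.sign_eq_of_continuousOn_Icc_of_ne_zero {f : ℝ → ℝ} {a b : ℝ} (hab : a ≤ b)
    (hf : ContinuousOn f (Icc a b)) (hne : ∀ s ∈ Icc a b, f s ≠ 0) :
    Real.sign (f b) = Real.sign (f a) := by
  have hfa := hne a (left_mem_Icc.mpr hab)
  have hfb := hne b (right_mem_Icc.mpr hab)
  rcases hfa.lt_or_gt with ha | ha <;> rcases hfb.lt_or_gt with hb | hb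
  · rw [Real.sign_of_neg ha, Real.sign_of_neg hb]
  · obtain ⟨s, hs, hs0⟩ := intermediate_value_Icc hab hf ⟨ha.le, hb.le⟩
    exact absurd hs0 (hne s hs)
  · obtain ⟨s, hs, hs0⟩ := intermediate_value_Icc' hab hf ⟨hb.le, ha.le⟩
    exact absurd hs0 (hne s hs)
  · rw [Real.sign_of_pos ha, Real.sign_of_pos hb]

theorem eq_of_hasDerivAt_eq_zero_of_le {F : ℝ → ℝ} {a t : ℝ}
    (hF : ∀ s ≥ a, HasDerivAt F 0 s) (ht : a ≤ t) : F t = F a :=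
  constant_of_has_deriv_right_zero
    (fun s hs => (hF s hs.1).continuousAt.continuousWithinAt)
    (fun s hs => (hF s hs.1).hasDerivWithinAt) t ⟨ht, le_rfl⟩

section ProductFlow

variable {ι : Type*} [Fintype ι] [DecidableEq ι] {f : ι → ℝ → ℝ} {g : ℝ → ℝ}

theorem hasDerivAt_sq_of_hasDerivAt_neg_prod_erase_mul {j : ι} {t : ℝ}
    (hf : HasDerivAt (f j) (-((∏ k ∈ univ.erase j, f k t) * g t)) t) :
    HasDerivAt (fun s => f j s ^ 2) (-(2 * (∏ k, f k t) * g t)) t := by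
  refine (hf.pow 2).congr_deriv ?_
  rw [← mul_prod_erase univ (fun k => f k t) (mem_univ j)]
  push_cast
  ring

theorem sq_sub_sq_eq_of_hasDerivAt_neg_prod_erase_mul
    (hf : ∀ j, ∀ t ≥ (0 : ℝ), HasDerivAt (f j) (-((∏ k ∈ univ.erase j, f k t) * g t)) t)
    (j l : ι) {t : ℝ} (ht : 0 ≤ t) :
    f j t ^ 2 - f l t ^ 2 = f j 0 ^ 2 - f l 0 ^ 2 :=
  eq_of_hasDerivAt_eq_zero_of_le (F := fun s => f j s ^ 2 - f l s ^ 2)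
    (fun s hs => ((hasDerivAt_sq_of_hasDerivAt_neg_prod_erase_mul (hf j s hs)).sub
      (hasDerivAt_sq_of_hasDerivAt_neg_prod_erase_mul (hf l s hs))).congr_deriv (sub_self _)) ht

end ProductFlow

theorem stmt_4_general {L d : ℕ} (u : Fin L → ℝ → Fin d → ℝ) (Loss : (Fin d → ℝ) → ℝ)
    (θ : ℝ → Fin d → ℝ)
    (hflow : ∀ j, ∀ t ≥ (0:ℝ), ∀ i,
      HasDerivAt (fun s => u j s i)
        (-((∏ k ∈ Finset.univ.erase j, u k t i) * grad Loss (θ t) i)) t)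
    (i : Fin d) (l : Fin L) (hl : ∀ k : Fin L, k ≠ l → |u l 0 i| < |u k 0 i|) :
    ∀ j : Fin L, j ≠ l → ∀ t ≥ (0:ℝ),
      u j t i = Real.sign (u j 0 i) *
        Real.sqrt (u l t i ^ 2 + u j 0 i ^ 2 - u l 0 i ^ 2) := by
  intro j hj t ht
  have hcons : ∀ s ≥ (0 : ℝ), u j s i ^ 2 - u l s i ^ 2 = u j 0 i ^ 2 - u l 0 i ^ 2 :=
    fun s hs => sq_sub_sq_eq_of_hasDerivAt_neg_prod_erase_mul
      (f := fun k s => u k s i) (fun k s hs => hflow k s hs i) j l hs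
  have hgap : u l 0 i ^ 2 < u j 0 i ^ 2 := sq_lt_sq.mpr (hl j hj)
  have hne : ∀ s ∈ Icc 0 t, u j s i ≠ 0 := fun s hs h0 => by
    nlinarith [hcons s hs.1, sq_nonneg (u l s i)]
  have hsign : Real.sign (u j t i) = Real.sign (u j 0 i) :=
    Real.sign_eq_of_continuousOn_Icc_of_ne_zero ht
      (fun s hs => (hflow j s hs.1 i).continuousAt.continuousWithinAt) hne
  rw [show u l t i ^ 2 + u j 0 i ^ 2 - u l 0 i ^ 2 = u j t i ^ 2 by linarith [hcons t ht],
    ← hsign, Real.sign_mul_sqrt_sq]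

theorem stmt_4 {L d : ℕ} (u : Fin L → ℝ → Fin d → ℝ) (Loss : (Fin d → ℝ) → ℝ)
    (hLoss : ContDiff ℝ 1 Loss)
    (θ : ℝ → Fin d → ℝ) (hθ : ∀ t i, θ t i = ∏ j, u j t i)
    (hflow : ∀ j, ∀ t ≥ (0:ℝ), ∀ i,
      HasDerivAt (fun s => u j s i)
        (-((∏ k ∈ Finset.univ.erase j, u k t i) * grad Loss (θ t) i)) t)
    (i : Fin d) (l : Fin L) (hl : ∀ k : Fin L, k ≠ l → |u l 0 i| < |u k 0 i|) :
    ∀ j : Fin L, j ≠ l → ∀ t ≥ (0:ℝ),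
      u j t i = Real.sign (u j 0 i) *
        Real.sqrt (u l t i ^ 2 + u j 0 i ^ 2 - u l 0 i ^ 2) :=
  stmt_4_general u Loss θ hflow i l hl
end

section
/- Let u, v : [0,∞) → ℝ^d satisfy the diagonal linear network gradient flow du/dt = -v ⊙ ∇L(u⊙v), dv/dt = -u ⊙ ∇L(u⊙v), and set θ = u ⊙ v and ξ(t) = -∫₀ᵗ ∇L(θ(s))ds. Assume that for every component i, u_i(0)² ≠ v_i(0)². Then for all t ≥ 0 and all i, θ_i(t) = (|u_i(0)² - v_i(0)²|/2) · sinh(2ξ_i(t) + log|(u_i(0)+v_i(0))/(u_i(0)-v_i(0))|). -/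
/-!
Along the flow, `u + v` and `u - v` solve the scalar linear equations `z' = ∓ ∇L(θ) z`, so
`u + v = (u₀ + v₀) e^{ξ}` and `u - v = (u₀ - v₀) e^{-ξ}` componentwise. Since
`θ = ((u + v)² - (u - v)²) / 4`, the formula follows from the identity
`(p² e^{y} - q² e^{-y}) / 4 = (|p q| / 2) sinh (y + log |p / q|)` for `p q ≠ 0`.
-/

open Set Real

theorem ContDiff.continuous_grad {d : ℕ} {f : (Fin d → ℝ) → ℝ} (hf : ContDiff ℝ 1 f)
    (i : Fin d) : Continuous fun x => grad f x i :=
  (hf.continuous_fderiv one_ne_zero).clm_apply continuous_const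

theorem abs_mul_div_two_mul_sinh_add_log_abs_div {p q : ℝ} (hp : p ≠ 0) (hq : q ≠ 0) (y : ℝ) :
    |p * q| / 2 * sinh (y + log |p / q|) = (p ^ 2 * exp y - q ^ 2 * exp (-y)) / 4 := by
  have hpq : 0 < |p / q| := abs_pos.mpr (div_ne_zero hp hq)
  have hp' : |p| ≠ 0 := abs_ne_zero.mpr hp
  have hq' : |q| ≠ 0 := abs_ne_zero.mpr hq
  rw [sinh_eq, neg_add, exp_add, exp_add, exp_neg (log _), exp_log hpq, abs_mul, abs_div,
    ← sq_abs p, ← sq_abs q]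
  field_simp
  ring

theorem eq_mul_exp_integral_of_hasDerivAt {w g : ℝ → ℝ} {a b : ℝ} (hab : a ≤ b)
    (hg : ContinuousOn g (Icc a b)) (hw : ∀ s ∈ Icc a b, HasDerivAt w (g s * w s) s) :
    w b = w a * exp (∫ s in a..b, g s) := by
  -- extend `g` continuously to `ℝ`, so that its primitive is differentiable everywhere
  set G : ℝ → ℝ := fun s => g (projIcc a b hab s)
  have hG : Continuous G :=
    hg.comp_continuous (continuous_subtype_val.comp continuous_projIcc) fun s => Subtype.prop _
  have hGg : ∀ s ∈ Icc a b, G s = g s := fun s hs => by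
    simp only [G, projIcc_of_mem hab hs]
  set F : ℝ → ℝ := fun s => ∫ r in a..s, G r
  have hF : ∀ s, HasDerivAt F (G s) s := fun s => (hG.integral_hasStrictDerivAt a s).hasDerivAt
  have hFb : F b = ∫ s in a..b, g s :=
    intervalIntegral.integral_congr fun s hs => hGg s (uIcc_of_le hab ▸ hs)
  have hconst : ∀ s ∈ Icc a b, w s * exp (-F s) = w a * exp (-F a) := by
    refine constant_of_has_deriv_right_zero (fun s hs => ?_) fun s hs => ?_
    · exact ((hw s hs).continuousAt.mul (hF s).neg.exp.continuousAt).continuousWithinAt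
    · have hs' : s ∈ Icc a b := Ico_subset_Icc_self hs
      have hd : HasDerivAt (fun r => w r * exp (-F r))
          (g s * w s * exp (-F s) + w s * (exp (-F s) * -G s)) s :=
        (hw s hs').mul (hF s).neg.exp
      refine hd.hasDerivWithinAt.congr_deriv ?_
      rw [hGg s hs']
      ring
  have hFa : F a = 0 := intervalIntegral.integral_same
  calc w b = w b * exp (-F b) * exp (F b) := by
        rw [mul_assoc, ← exp_add, neg_add_cancel, exp_zero, mul_one]
    _ = w a * exp (∫ s in a..b, g s) := by
        rw [hconst b (right_mem_Icc.mpr hab), hFa, neg_zero, exp_zero, mul_one, hFb]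

theorem stmt_12 {d : ℕ} (u v : ℝ → Fin d → ℝ) (Loss : (Fin d → ℝ) → ℝ)
    (hLoss : ContDiff ℝ 1 Loss)
    (θ : ℝ → Fin d → ℝ) (hθ : ∀ t i, θ t i = u t i * v t i)
    (hflowu : ∀ t ≥ (0:ℝ), ∀ i,
      HasDerivAt (fun s => u s i) (-(v t i * grad Loss (θ t) i)) t)
    (hflowv : ∀ t ≥ (0:ℝ), ∀ i,
      HasDerivAt (fun s => v s i) (-(u t i * grad Loss (θ t) i)) t)
    (ξ : ℝ → Fin d → ℝ)
    (hξ : ∀ t i, ξ t i = -∫ s in (0:ℝ)..t, grad Loss (θ s) i)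
    (hinit : ∀ i, u 0 i ^ 2 ≠ v 0 i ^ 2) :
    ∀ t ≥ (0:ℝ), ∀ i,
      θ t i = |u 0 i ^ 2 - v 0 i ^ 2| / 2 *
        Real.sinh (2 * ξ t i + Real.log |(u 0 i + v 0 i) / (u 0 i - v 0 i)|) := by
  intro t ht i
  have hθc : ContinuousOn θ (Ici 0) := by
    rw [show θ = fun r j => u r j * v r j from funext₂ hθ]
    exact continuousOn_pi.mpr fun j s hs =>
      ((hflowu s hs j).continuousAt.mul (hflowv s hs j).continuousAt).continuousWithinAt
  have hg : ContinuousOn (fun s => grad Loss (θ s) i) (Icc 0 t) :=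
    (hLoss.continuous_grad i).comp_continuousOn (hθc.mono Icc_subset_Ici_self)
  have hplus : u t i + v t i = (u 0 i + v 0 i) * exp (ξ t i) := by
    rw [hξ, ← intervalIntegral.integral_neg]
    exact eq_mul_exp_integral_of_hasDerivAt (w := fun s => u s i + v s i)
      (g := fun s => -grad Loss (θ s) i) ht hg.neg fun s hs =>
        ((hflowu s hs.1 i).add (hflowv s hs.1 i)).congr_deriv (by ring)
  have hminus : u t i - v t i = (u 0 i - v 0 i) * exp (-ξ t i) := by
    rw [hξ, neg_neg]
    exact eq_mul_exp_integral_of_hasDerivAt (w := fun s => u s i - v s i) ht hg fun s hs =>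
      ((hflowu s hs.1 i).sub (hflowv s hs.1 i)).congr_deriv (by ring)
  obtain ⟨hp, hq⟩ := mul_ne_zero_iff.mp
    (show (u 0 i + v 0 i) * (u 0 i - v 0 i) ≠ 0 by
      rw [← sq_sub_sq]; exact sub_ne_zero.mpr (hinit i))
  calc θ t i = ((u t i + v t i) ^ 2 - (u t i - v t i) ^ 2) / 4 := by rw [hθ]; ring
    _ = ((u 0 i + v 0 i) ^ 2 * exp (2 * ξ t i)
          - (u 0 i - v 0 i) ^ 2 * exp (-(2 * ξ t i))) / 4 := by
        rw [hplus, hminus, mul_pow, mul_pow, ← exp_nat_mul, ← exp_nat_mul]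
        ring_nf
    _ = _ := by rw [sq_sub_sq, abs_mul_div_two_mul_sinh_add_log_abs_div hp hq]
end
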